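/- Let (H,{F_A},{F_G}) be a GR(1) game with singleton winning conditions and Z^∞ = ⟦φ₄⟧ with the associated rank. Then for every state q: (i) q ∈ F_G ∩ Pre¹(Z^∞) iff rank(q) = (1,1) iff q ∈ F_G ∩ Z^∞; (ii) q ∈ Pre¹(Yⁱ⁻¹)∖Yⁱ⁻¹ for some i > 1 iff rank(q) = (i,1) with i > 1 iff q ∈ (F_A∖F_G) ∩ Z^∞; (iii) rank(q) = (i,j) with j > 1 iff q ∈ Z^∞∖(F_A ∪ F_G). -/
import Mathlib


namespace GR1

/-- A two-player game graph `H = ⟨Q⁰, Q¹, δ⁰, δ¹, q₀⟩`.  `env` is the set `Q⁰` of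
environment states, `sys` the set `Q¹` of system states, and `delta` combines the
transition functions `δ⁰` and `δ¹`. -/
structure GameGraph (Q : Type*) where
  env : Set Q
  sys : Set Q
  delta : Q → Set Q
  disjoint_env_sys : Disjoint env sys
  union_env_sys : env ∪ sys = Set.univ
  delta_env : ∀ q ∈ env, delta q ⊆ sys
  delta_sys : ∀ q ∈ sys, delta q ⊆ env
  delta_nonempty : ∀ q, (delta q).Nonempty
  init : Q
  init_env : init ∈ env

namespace GameGraph

/-- The existential predecessor operator `Pre∃`. -/
def PreE {Q : Type*} (G : GameGraph Q) (P : Set Q) : Set Q :=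
  {q | (G.delta q ∩ P).Nonempty}

/-- The universal predecessor operator `Pre∀`. -/
def PreA {Q : Type*} (G : GameGraph Q) (P : Set Q) : Set Q :=
  {q | G.delta q ⊆ P}

/-- The player-0 (environment) controllable predecessor operator `Pre⁰`. -/
def Pre0 {Q : Type*} (G : GameGraph Q) (P : Set Q) : Set Q :=
  {q | q ∈ G.env ∧ (G.delta q ∩ P).Nonempty} ∪ {q | q ∈ G.sys ∧ G.delta q ⊆ P}

/-- The player-1 (system) controllable predecessor operator `Pre¹`. -/
def Pre1 {Q : Type*} (G : GameGraph Q) (P : Set Q) : Set Q :=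
  {q | q ∈ G.env ∧ G.delta q ⊆ P} ∪ {q | q ∈ G.sys ∧ (G.delta q ∩ P).Nonempty}

/-- The conditional predecessor `Precond(P,P') = Pre∃(P) ∩ Pre¹(P ∪ P')`. -/
def Precond {Q : Type*} (G : GameGraph Q) (P P' : Set Q) : Set Q :=
  G.PreE P ∩ G.Pre1 (P ∪ P')

/-- The dual conditional predecessor `Precondᶜ(P,P') = Pre∀(P) ∪ Pre⁰(P ∩ P')`. -/
def PrecondC {Q : Type*} (G : GameGraph Q) (P P' : Set Q) : Set Q :=
  G.PreA P ∪ G.Pre0 (P ∩ P')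

end GameGraph

/-- Knaster–Tarski least fixed point over the powerset lattice. -/
def lfpSet {Q : Type*} (F : Set Q → Set Q) : Set Q := ⋂₀ {S | F S ⊆ S}

/-- Knaster–Tarski greatest fixed point over the powerset lattice. -/
def gfpSet {Q : Type*} (F : Set Q → Set Q) : Set Q := ⋃₀ {S | S ⊆ F S}

/-- Knaster–Tarski least fixed point over the lattice of vectors of sets. -/
def lfpVec {Q : Type*} {n : ℕ} (F : (Fin n → Set Q) → (Fin n → Set Q)) : Fin n → Set Q :=
  fun a => ⋂ V ∈ {V : Fin n → Set Q | ∀ a', F V a' ⊆ V a'}, V a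

/-- Knaster–Tarski greatest fixed point over the lattice of vectors of sets. -/
def gfpVec {Q : Type*} {n : ℕ} (F : (Fin n → Set Q) → (Fin n → Set Q)) : Fin n → Set Q :=
  fun a => ⋃ V ∈ {V : Fin n → Set Q | ∀ a', V a' ⊆ F V a'}, V a

/-- Cyclic successor of a mode: `a⁺ = (a mod n) + 1` in 1-based counting. -/
def modeSucc {n : ℕ} (a : Fin n) : Fin n :=
  ⟨(a.val + 1) % n, Nat.mod_lt _ a.pos⟩

/-- `π` is an (infinite) play over `G` starting in the state `q`. -/
def IsPlayFrom {Q : Type*} (G : GameGraph Q) (q : Q) (π : ℕ → Q) : Prop :=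
  π 0 = q ∧ ∀ k, π (k + 1) ∈ G.delta (π k)

/-- `Inf(π) ∩ F ≠ ∅` : the play `π` visits the set `F` infinitely often. -/
def InfOft {Q : Type*} (π : ℕ → Q) (F : Set Q) : Prop := ∀ n, ∃ k, n ≤ k ∧ π k ∈ F

/-- `L_q(H,F)` : plays from `q` satisfying the Büchi condition `F`. -/
def LBuchi {Q : Type*} (G : GameGraph Q) (q : Q) (F : Set Q) : Set (ℕ → Q) :=
  {π | IsPlayFrom G q π ∧ InfOft π F}

/-- `L_q(H,𝓕)` : plays from `q` satisfying the generalized Büchi condition `𝓕`. -/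
def LGenBuchi {Q ι : Type*} (G : GameGraph Q) (q : Q) (F : ι → Set Q) : Set (ℕ → Q) :=
  {π | IsPlayFrom G q π ∧ ∀ i, InfOft π (F i)}

/-- `Pre(L)` : the set of all finite prefixes of the (infinite) words in `L`. -/
def prefixes {Q : Type*} (L : Set (ℕ → Q)) : Set (List Q) :=
  {w | ∃ π ∈ L, ∃ k, w = (List.range k).map π}

/-- A (history dependent) system strategy: on a history ending in a system state it
produces a `δ¹`-successor of that state. -/
def IsSysStrategy {Q : Type*} (G : GameGraph Q) (f : List Q → Q) : Prop :=
  ∀ (w : List Q) (q : Q), q ∈ G.sys → f (w ++ [q]) ∈ G.delta q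

/-- The finite history `π|_{[0,k]}` of a play. -/
def histUpTo {Q : Type*} (π : ℕ → Q) (k : ℕ) : List Q := (List.range (k + 1)).map π

/-- `L_q(H,f¹)` : plays from `q` compliant with the system strategy `f¹`. -/
def Lstrat {Q : Type*} (G : GameGraph Q) (q : Q) (f : List Q → Q) : Set (ℕ → Q) :=
  {π | IsPlayFrom G q π ∧ ∀ k, π k ∈ G.sys → π (k + 1) = f (histUpTo π k)}

/-- `L_q(H,f¹)` for a memoryless system strategy `f¹ : Q → Q`. -/
def Lmem {Q : Type*} (G : GameGraph Q) (q : Q) (f : Q → Q) : Set (ℕ → Q) :=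
  {π | IsPlayFrom G q π ∧ ∀ k, π k ∈ G.sys → π (k + 1) = f (π k)}

/-- Strict lexicographic order on ranks. -/
def rankLt (p r : ℕ × ℕ) : Prop := p.1 < r.1 ∨ (p.1 = r.1 ∧ p.2 < r.2)

/-- Lexicographic order on ranks. -/
def rankLe (p r : ℕ × ℕ) : Prop := p.1 < r.1 ∨ (p.1 = r.1 ∧ p.2 ≤ r.2)

/-! ### The 4-nested fixed point `φ₄` for singleton winning conditions -/

/-- The body `(F_G ∩ Pre¹(Z)) ∪ Pre¹(Y) ∪ ((Q∖F_A) ∩ Precond(W, X∖F_A))`. -/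
def body {Q : Type*} (G : GameGraph Q) (FA FG Z Y X W : Set Q) : Set Q :=
  (FG ∩ G.Pre1 Z) ∪ G.Pre1 Y ∪ (FAᶜ ∩ G.Precond W (X \ FA))

def innerW {Q : Type*} (G : GameGraph Q) (FA FG Z Y X : Set Q) : Set Q :=
  lfpSet (fun W => body G FA FG Z Y X W)

def innerX {Q : Type*} (G : GameGraph Q) (FA FG Z Y : Set Q) : Set Q :=
  gfpSet (fun X => innerW G FA FG Z Y X)

def innerY {Q : Type*} (G : GameGraph Q) (FA FG Z : Set Q) : Set Q :=
  lfpSet (fun Y => innerX G FA FG Z Y)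

/-- `⟦φ₄⟧ = Z^∞` : the value of `νZ.μY.νX.μW. (F_G ∩ Pre¹(Z)) ∪ Pre¹(Y) ∪
((Q∖F_A) ∩ Precond(W, X∖F_A))`. -/
def phi4 {Q : Type*} (G : GameGraph Q) (FA FG : Set Q) : Set Q :=
  gfpSet (fun Z => innerY G FA FG Z)

/-- The approximants `Yⁱ` of `Y` in the terminal iteration over `Z` (`Y⁰ = ∅`). -/
def Yapprox {Q : Type*} (G : GameGraph Q) (FA FG : Set Q) : ℕ → Set Q
  | 0 => ∅
  | i + 1 => innerX G FA FG (phi4 G FA FG) (Yapprox G FA FG i)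

/-- The approximants `Wⁱ_j` of `W` computed with `X = Xⁱ = Yⁱ` and `Y = Yⁱ⁻¹`. -/
def Wapprox {Q : Type*} (G : GameGraph Q) (FA FG : Set Q) (i : ℕ) : ℕ → Set Q
  | 0 => ∅
  | j + 1 =>
      body G FA FG (phi4 G FA FG) (Yapprox G FA FG (i - 1)) (Yapprox G FA FG i)
        (Wapprox G FA FG i j)

/-- `rank(q) = (i,j)` iff `q ∈ (Yⁱ∖Yⁱ⁻¹) ∩ (Wⁱ_j∖Wⁱ_{j−1})` with `i,j > 0`. -/
def hasRank {Q : Type*} (G : GameGraph Q) (FA FG : Set Q) (q : Q) (i j : ℕ) : Prop :=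
  0 < i ∧ 0 < j ∧
    q ∈ (Yapprox G FA FG i \ Yapprox G FA FG (i - 1)) ∩
        (Wapprox G FA FG i j \ Wapprox G FA FG i (j - 1))

/-- The memoryless system strategy extracted from the ranking: `f¹(q) ∈ δ¹(q)`,
`rank(f¹(q)) < rank(q)` whenever `rank(q) > (1,1)`, and `f¹(q) ∈ Z^∞` otherwise. -/
def GoodStrategy {Q : Type*} (G : GameGraph Q) (FA FG : Set Q) (f : Q → Q) : Prop :=
  ∀ q, q ∈ G.sys → q ∈ phi4 G FA FG →
    f q ∈ G.delta q ∧
      ∀ i j, hasRank G FA FG q i j →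
        (((i, j) = ((1 : ℕ), (1 : ℕ)) → f q ∈ phi4 G FA FG) ∧
          ((i, j) ≠ ((1 : ℕ), (1 : ℕ)) →
            ∃ i' j', hasRank G FA FG (f q) i' j' ∧ rankLt (i', j') (i, j)))

/-! ### The negated fixed point `φ̄₄` (singleton conditions) -/

/-- The simplified negated body
`Pre⁰(Z̄) ∪ ((Q∖F_G) ∩ F_A ∩ Pre⁰(Ȳ)) ∪ ((Q∖F_G) ∩ Precondᶜ(W̄, X̄ ∪ F_A))`. -/
def nbody {Q : Type*} (G : GameGraph Q) (FA FG Z Y X W : Set Q) : Set Q :=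
  G.Pre0 Z ∪ (FGᶜ ∩ FA ∩ G.Pre0 Y) ∪ (FGᶜ ∩ G.PrecondC W (X ∪ FA))

/-- The simplified negated fixed point `φ̄₄ = μZ̄.νȲ.μX̄.νW̄. nbody`. -/
def phi4neg {Q : Type*} (G : GameGraph Q) (FA FG : Set Q) : Set Q :=
  lfpSet (fun Z => gfpSet (fun Y => lfpSet (fun X => gfpSet (fun W =>
    nbody G FA FG Z Y X W))))

/-- The unsimplified negation body
`((Q∖F_G) ∪ Pre⁰(Z̄)) ∩ Pre⁰(Ȳ) ∩ (F_A ∪ Precondᶜ(W̄, X̄ ∪ F_A))`. -/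
def nbodyRaw {Q : Type*} (G : GameGraph Q) (FA FG Z Y X W : Set Q) : Set Q :=
  (FGᶜ ∪ G.Pre0 Z) ∩ G.Pre0 Y ∩ (FA ∪ G.PrecondC W (X ∪ FA))

/-- The unsimplified negated fixed point. -/
def phi4negRaw {Q : Type*} (G : GameGraph Q) (FA FG : Set Q) : Set Q :=
  lfpSet (fun Z => gfpSet (fun Y => lfpSet (fun X => gfpSet (fun W =>
    nbodyRaw G FA FG Z Y X W))))

/-- The approximants `Z̄ⁱ` of the negated fixed point (`Z̄⁰ = ∅`). -/
def Zbar {Q : Type*} (G : GameGraph Q) (FA FG : Set Q) : ℕ → Set Q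
  | 0 => ∅
  | i + 1 =>
      gfpSet (fun Y => lfpSet (fun X => gfpSet (fun W =>
        nbody G FA FG (Zbar G FA FG i) Y X W)))

/-- The approximants `X̄ⁱ_j` of `X̄` computed while computing `Z̄ⁱ` (using `Ȳ = Z̄ⁱ` and
`Z̄ = Z̄ⁱ⁻¹`), with `X̄ⁱ₀ = ∅`. -/
def Xbar {Q : Type*} (G : GameGraph Q) (FA FG : Set Q) (i : ℕ) : ℕ → Set Q
  | 0 => ∅
  | j + 1 =>
      gfpSet (fun W =>
        nbody G FA FG (Zbar G FA FG (i - 1)) (Zbar G FA FG i) (Xbar G FA FG i j) W)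

/-- The negated rank: `rank(q) = (i,j)` iff `q ∈ X̄ⁱ_j ∖ X̄ⁱ_{j−1}` with `i,j > 0`. -/
def nrank {Q : Type*} (G : GameGraph Q) (FA FG : Set Q) (q : Q) (i j : ℕ) : Prop :=
  0 < i ∧ 0 < j ∧ q ∈ Xbar G FA FG i j \ Xbar G FA FG i (j - 1)

/-- Environment moves permitted during the inductive construction of the reachable
region `R_{f¹}` (cases (a'), (b'), (c'2), (c'3) and the remaining case (c'1)). -/
def envStep {Q : Type*} (G : GameGraph Q) (FA FG : Set Q) (q' q'' : Q) : Prop :=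
  q'' ∈ G.delta q' ∧
    ∃ i j, nrank G FA FG q' i j ∧
      ((q'' ∈ (phi4 G FA FG)ᶜ ∧ ∃ i' j', nrank G FA FG q'' i' j' ∧ i' ≤ i - 1) ∨
       (q' ∈ FA \ FG ∧ q'' ∈ (phi4 G FA FG)ᶜ ∧
          ∃ i' j', nrank G FA FG q'' i' j' ∧ i' ≤ i) ∨
       (q'' ∈ (phi4 G FA FG)ᶜ ∧
          ∃ i' j', nrank G FA FG q'' i' j' ∧ rankLe (i', j') (i, j - 1)) ∨
       (q'' ∈ (phi4 G FA FG)ᶜ ∧ q'' ∈ FA ∧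
          ∃ i' j', nrank G FA FG q'' i' j' ∧ rankLe (i', j') (i, j)) ∨
       (∀ p ∈ G.delta q', p ∈ (phi4 G FA FG)ᶜ ∧
          ∃ i' j', nrank G FA FG p i' j' ∧ rankLe (i', j') (i, j)))

/-- `L_q(H,f¹,R_{f¹})` : plays from `q` compliant with `f¹` that remain within the
reachable region `R_{f¹}`, i.e. in which every environment move follows the rules of
the inductive construction of `R_{f¹}`. -/
def Lrestr {Q : Type*} (G : GameGraph Q) (FA FG : Set Q) (q : Q) (f : List Q → Q) :
    Set (ℕ → Q) :=
  {π | π ∈ Lstrat G q f ∧ ∀ k, π k ∈ G.env → envStep G FA FG (π k) (π (k + 1))}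

/-! ### The vectorized fixed point `φ₄ᵛ` for general GR(1) conditions -/

/-- The body `Ω^{ab}` of the vectorized fixed point. -/
def bodyV {Q : Type*} {n m : ℕ} (G : GameGraph Q) (FAv : Fin m → Set Q)
    (FGv : Fin n → Set Q) (Zv : Fin n → Set Q) (a : Fin n) (b : Fin m)
    (Y X W : Set Q) : Set Q :=
  (FGv a ∩ G.Pre1 (Zv (modeSucc a))) ∪ G.Pre1 Y ∪ ((FAv b)ᶜ ∩ G.Precond W (X \ FAv b))

def innerWV {Q : Type*} {n m : ℕ} (G : GameGraph Q) (FAv : Fin m → Set Q)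
    (FGv : Fin n → Set Q) (Zv : Fin n → Set Q) (a : Fin n) (b : Fin m)
    (Y X : Set Q) : Set Q :=
  lfpSet (fun W => bodyV G FAv FGv Zv a b Y X W)

def innerXV {Q : Type*} {n m : ℕ} (G : GameGraph Q) (FAv : Fin m → Set Q)
    (FGv : Fin n → Set Q) (Zv : Fin n → Set Q) (a : Fin n) (b : Fin m)
    (Y : Set Q) : Set Q :=
  gfpSet (fun X => innerWV G FAv FGv Zv a b Y X)

/-- The vector `[Z¹,…,Zⁿ]` of the vectorized fixed point `φ₄ᵛ`. -/
def phi4v {Q : Type*} {n m : ℕ} (G : GameGraph Q) (FAv : Fin m → Set Q)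
    (FGv : Fin n → Set Q) : Fin n → Set Q :=
  gfpVec (fun Zv a => lfpSet (fun Y => ⋃ b, innerXV G FAv FGv Zv a b Y))

/-- `⟦φ₄ᵛ⟧ = Z^∞ = ⋃_a Zᵃ^∞`. -/
def phi4vSem {Q : Type*} {n m : ℕ} (G : GameGraph Q) (FAv : Fin m → Set Q)
    (FGv : Fin n → Set Q) : Set Q :=
  ⋃ a, phi4v G FAv FGv a

/-- The approximants `ᵃYⁱ` (with `ᵃY⁰ = ∅`) of `Yᵃ` in the terminal iteration. -/
def YapproxV {Q : Type*} {n m : ℕ} (G : GameGraph Q) (FAv : Fin m → Set Q)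
    (FGv : Fin n → Set Q) (a : Fin n) : ℕ → Set Q
  | 0 => ∅
  | i + 1 => ⋃ b, innerXV G FAv FGv (phi4v G FAv FGv) a b (YapproxV G FAv FGv a i)

/-- The fixed point `ᵃᵇXⁱ` of `X^{ab}` computed during the `i`-th iteration. -/
def XfixV {Q : Type*} {n m : ℕ} (G : GameGraph Q) (FAv : Fin m → Set Q)
    (FGv : Fin n → Set Q) (a : Fin n) (b : Fin m) (i : ℕ) : Set Q :=
  innerXV G FAv FGv (phi4v G FAv FGv) a b (YapproxV G FAv FGv a (i - 1))

/-- The approximants `ᵃᵇWⁱ_j` of `W^{ab}` computed while computing `ᵃYⁱ`. -/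
def WapproxV {Q : Type*} {n m : ℕ} (G : GameGraph Q) (FAv : Fin m → Set Q)
    (FGv : Fin n → Set Q) (a : Fin n) (b : Fin m) (i : ℕ) : ℕ → Set Q
  | 0 => ∅
  | j + 1 =>
      bodyV G FAv FGv (phi4v G FAv FGv) a b (YapproxV G FAv FGv a (i - 1))
        (XfixV G FAv FGv a b i) (WapproxV G FAv FGv a b i j)

/-- The mode-based rank: `ᵃᵇrank(q) = (i,j)` iff
`q ∈ (ᵃYⁱ∖ᵃYⁱ⁻¹) ∩ (ᵃᵇWⁱ_j∖ᵃᵇWⁱ_{j−1})` with `i,j > 0`. -/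
def hasRankV {Q : Type*} {n m : ℕ} (G : GameGraph Q) (FAv : Fin m → Set Q)
    (FGv : Fin n → Set Q) (a : Fin n) (b : Fin m) (q : Q) (i j : ℕ) : Prop :=
  0 < i ∧ 0 < j ∧
    q ∈ (YapproxV G FAv FGv a i \ YapproxV G FAv FGv a (i - 1)) ∩
        (WapproxV G FAv FGv a b i j \ WapproxV G FAv FGv a b i (j - 1))

/-- The finite-memory system strategy extracted from the mode-based ranking. -/
def GoodStrategyV {Q : Type*} {n m : ℕ} (G : GameGraph Q) (FAv : Fin m → Set Q)
    (FGv : Fin n → Set Q) (f : Q × Fin n × Fin m → Q × Fin n × Fin m) : Prop :=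
  ∀ (q : Q) (a : Fin n) (b : Fin m), q ∈ G.sys → q ∈ phi4v G FAv FGv a →
    (f (q, a, b)).1 ∈ G.delta q ∧
      ∀ i j, hasRankV G FAv FGv a b q i j →
        (((i, j) = ((1 : ℕ), (1 : ℕ)) →
            (f (q, a, b)).1 ∈ phi4v G FAv FGv (modeSucc a) ∧
              (f (q, a, b)).2.1 = modeSucc a) ∧
          (1 < i ∧ j = 1 →
            (f (q, a, b)).2.1 = a ∧
              ∃ i' j',
                hasRankV G FAv FGv a ((f (q, a, b)).2.2) ((f (q, a, b)).1) i' j' ∧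
                  i' ≤ i - 1) ∧
          (1 < j →
            (f (q, a, b)).2.1 = a ∧ (f (q, a, b)).2.2 = b ∧
              ∃ i' j',
                hasRankV G FAv FGv a b ((f (q, a, b)).1) i' j' ∧
                  rankLe (i', j') (i, j - 1)))

/-- Compliance of a play with a finite-memory strategy via mode traces `α`, `β`. -/
def CompliantModeV {Q : Type*} {n m : ℕ} (G : GameGraph Q) (FAv : Fin m → Set Q)
    (FGv : Fin n → Set Q) (f : Q × Fin n × Fin m → Q × Fin n × Fin m)
    (π : ℕ → Q) (α : ℕ → Fin n) (β : ℕ → Fin m) : Prop :=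
  ∀ k,
    (π k ∈ G.sys → (π (k + 1), α (k + 1), β (k + 1)) = f (π k, α k, β k)) ∧
      (π k ∈ G.env →
        (hasRankV G FAv FGv (α k) (β k) (π (k + 1)) 1 1 →
            α (k + 1) = modeSucc (α k)) ∧
          ((∃ i, 1 < i ∧ hasRankV G FAv FGv (α k) (β k) (π (k + 1)) i 1) →
            α (k + 1) = α k) ∧
          ((∃ i j, 1 < j ∧ hasRankV G FAv FGv (α k) (β k) (π (k + 1)) i j) →
            α (k + 1) = α k ∧ β (k + 1) = β k))

/-- `L_q(H,f¹)` for a finite-memory strategy: plays from `q` compliant with `f¹`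
for some mode traces. -/
def LmodeV {Q : Type*} {n m : ℕ} (G : GameGraph Q) (FAv : Fin m → Set Q)
    (FGv : Fin n → Set Q) (q : Q) (f : Q × Fin n × Fin m → Q × Fin n × Fin m) :
    Set (ℕ → Q) :=
  {π | IsPlayFrom G q π ∧ ∃ α β, CompliantModeV G FAv FGv f π α β}

/-- `ᵃD = F_Gᵃ ∩ Pre¹(Z^{a⁺,∞})`. -/
def DsetV {Q : Type*} {n m : ℕ} (G : GameGraph Q) (FAv : Fin m → Set Q)
    (FGv : Fin n → Set Q) (a : Fin n) : Set Q :=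
  FGv a ∩ G.Pre1 (phi4v G FAv FGv (modeSucc a))

/-- `ᵃEⁱ = Pre¹(ᵃYⁱ⁻¹) ∖ ᵃYⁱ⁻¹`. -/
def EsetV {Q : Type*} {n m : ℕ} (G : GameGraph Q) (FAv : Fin m → Set Q)
    (FGv : Fin n → Set Q) (a : Fin n) (i : ℕ) : Set Q :=
  G.Pre1 (YapproxV G FAv FGv a (i - 1)) \ YapproxV G FAv FGv a (i - 1)

/-- `ᵃᵇΘⁱ_j = (Q∖F_Aᵇ) ∩ Precond(ᵃᵇWⁱ_{j−1}, ᵃᵇXⁱ∖F_Aᵇ)`. -/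
def ThetaV {Q : Type*} {n m : ℕ} (G : GameGraph Q) (FAv : Fin m → Set Q)
    (FGv : Fin n → Set Q) (a : Fin n) (b : Fin m) (i j : ℕ) : Set Q :=
  (FAv b)ᶜ ∩ G.Precond (WapproxV G FAv FGv a b i (j - 1)) (XfixV G FAv FGv a b i \ FAv b)

/-- `ᵃᵇRⁱ_j = ᵃᵇΘⁱ_j ∖ (ᵃᵇWⁱ_{j−1} ∪ ᵃYⁱ⁻¹ ∪ ᵃEⁱ ∪ ᵃD)`. -/
def RsetV {Q : Type*} {n m : ℕ} (G : GameGraph Q) (FAv : Fin m → Set Q)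
    (FGv : Fin n → Set Q) (a : Fin n) (b : Fin m) (i j : ℕ) : Set Q :=
  ThetaV G FAv FGv a b i j \
    (WapproxV G FAv FGv a b i (j - 1) ∪ YapproxV G FAv FGv a (i - 1) ∪
      EsetV G FAv FGv a i ∪ DsetV G FAv FGv a)

/-! ### The negated vectorized fixed point -/

/-- The body of the negated vectorized fixed point. -/
def nbodyV {Q : Type*} {n m : ℕ} (G : GameGraph Q) (FAv : Fin m → Set Q)
    (FGv : Fin n → Set Q) (Zv : Fin n → Set Q) (a : Fin n) (b : Fin m)
    (Y X W : Set Q) : Set Q :=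
  G.Pre0 (Zv (modeSucc a)) ∪ ((FGv a)ᶜ ∩ FAv b ∩ G.Pre0 Y) ∪
    ((FGv a)ᶜ ∩ G.PrecondC W (X ∪ FAv b))

/-- The coordinated approximants `Z̄ᵃⁱ` of the negated vectorized fixed point. -/
def ZbarV {Q : Type*} {n m : ℕ} (G : GameGraph Q) (FAv : Fin m → Set Q)
    (FGv : Fin n → Set Q) : ℕ → Fin n → Set Q
  | 0 => fun _ => ∅
  | i + 1 => fun a =>
      gfpSet (fun Y => ⋂ b, lfpSet (fun X => gfpSet (fun W =>
        nbodyV G FAv FGv (ZbarV G FAv FGv i) a b Y X W)))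

/-- The approximants `X̄^{ab,i}_j` of `X̄^{ab}` computed during the `i`-th iteration. -/
def XbarV {Q : Type*} {n m : ℕ} (G : GameGraph Q) (FAv : Fin m → Set Q)
    (FGv : Fin n → Set Q) (a : Fin n) (b : Fin m) (i : ℕ) : ℕ → Set Q
  | 0 => ∅
  | j + 1 =>
      gfpSet (fun W =>
        nbodyV G FAv FGv (ZbarV G FAv FGv (i - 1)) a b (ZbarV G FAv FGv i a)
          (XbarV G FAv FGv a b i j) W)

/-- The negated mode-based rank: `ᵃᵇrank(q) = (i,j)` iff `q ∈ X̄^{ab,i}_j∖X̄^{ab,i}_{j−1}`. -/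
def nrankV {Q : Type*} {n m : ℕ} (G : GameGraph Q) (FAv : Fin m → Set Q)
    (FGv : Fin n → Set Q) (a : Fin n) (b : Fin m) (q : Q) (i j : ℕ) : Prop :=
  0 < i ∧ 0 < j ∧ q ∈ XbarV G FAv FGv a b i j \ XbarV G FAv FGv a b i (j - 1)

/-- Environment moves permitted during the inductive construction of `R_{f¹}`
in the vectorized setting. -/
def envStepV {Q : Type*} {n m : ℕ} (G : GameGraph Q) (FAv : Fin m → Set Q)
    (FGv : Fin n → Set Q) (q' q'' : Q) : Prop :=
  q'' ∈ G.delta q' ∧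
    ∃ (a : Fin n) (b : Fin m) (i j : ℕ), nrankV G FAv FGv a b q' i j ∧
      ((q'' ∈ (phi4vSem G FAv FGv)ᶜ ∧
          ∃ b' i' j', nrankV G FAv FGv (modeSucc a) b' q'' i' j' ∧ i' ≤ i - 1) ∨
       (q' ∈ FAv b \ FGv a ∧ q'' ∈ (phi4vSem G FAv FGv)ᶜ ∧
          ∃ b' i' j', nrankV G FAv FGv a b' q'' i' j' ∧ i' ≤ i) ∨
       (q'' ∈ (phi4vSem G FAv FGv)ᶜ ∧
          ∃ i' j', nrankV G FAv FGv a b q'' i' j' ∧ rankLe (i', j') (i, j - 1)) ∨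
       (q'' ∈ (phi4vSem G FAv FGv)ᶜ ∧ q'' ∈ FAv b ∧
          ∃ i' j', nrankV G FAv FGv a b q'' i' j' ∧ rankLe (i', j') (i, j)) ∨
       (∀ p ∈ G.delta q', p ∈ (phi4vSem G FAv FGv)ᶜ ∧
          ∃ i' j', nrankV G FAv FGv a b p i' j' ∧ rankLe (i', j') (i, j)))

/-- `L_q(H,f¹,R_{f¹})` in the vectorized setting. -/
def LrestrV {Q : Type*} {n m : ℕ} (G : GameGraph Q) (FAv : Fin m → Set Q)
    (FGv : Fin n → Set Q) (q : Q) (f : List Q → Q) : Set (ℕ → Q) :=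
  {π | π ∈ Lstrat G q f ∧ ∀ k, π k ∈ G.env → envStepV G FAv FGv (π k) (π (k + 1))}

/-! ### Auxiliary lemmas for the rank characterization -/

section Aux

variable {Q : Type*}

lemma PreE_mono (G : GameGraph Q) {P P' : Set Q} (h : P ⊆ P') : G.PreE P ⊆ G.PreE P' := by
  intro q hq
  obtain ⟨x, hx1, hx2⟩ := hq
  exact ⟨x, hx1, h hx2⟩

lemma Pre1_mono (G : GameGraph Q) {P P' : Set Q} (h : P ⊆ P') : G.Pre1 P ⊆ G.Pre1 P' := by
  rintro q (⟨hq, hs⟩ | ⟨hq, x, hx1, hx2⟩)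
  · exact Or.inl ⟨hq, hs.trans h⟩
  · exact Or.inr ⟨hq, x, hx1, h hx2⟩

lemma Precond_mono (G : GameGraph Q) {P P' R R' : Set Q} (h : P ⊆ P') (h' : R ⊆ R') :
    G.Precond P R ⊆ G.Precond P' R' :=
  Set.inter_subset_inter (PreE_mono G h) (Pre1_mono G (Set.union_subset_union h h'))

lemma PreE_empty (G : GameGraph Q) : G.PreE (∅ : Set Q) = ∅ := by
  ext q; simp [GameGraph.PreE]

lemma Precond_empty (G : GameGraph Q) (P' : Set Q) : G.Precond (∅ : Set Q) P' = ∅ := by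
  rw [GameGraph.Precond, PreE_empty, Set.empty_inter]

lemma Pre1_empty (G : GameGraph Q) : G.Pre1 (∅ : Set Q) = ∅ := by
  ext q
  simp only [GameGraph.Pre1, Set.mem_union, Set.mem_setOf_eq, Set.mem_empty_iff_false,
    iff_false]
  rintro (⟨hq, hs⟩ | ⟨hq, x, hx1, hx2⟩)
  · obtain ⟨x, hx⟩ := G.delta_nonempty q
    exact hs hx
  · exact hx2

lemma Pre1_subset_PreE (G : GameGraph Q) {P : Set Q} : G.Pre1 P ⊆ G.PreE P := by
  rintro q (⟨hq, hs⟩ | ⟨hq, x, hx1, hx2⟩)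
  · obtain ⟨x, hx⟩ := G.delta_nonempty q
    exact ⟨x, hx, hs hx⟩
  · exact ⟨x, hx1, hx2⟩

lemma Precond_subset_Pre1 (G : GameGraph Q) {P R : Set Q} :
    G.Precond P R ⊆ G.Pre1 (P ∪ R) := Set.inter_subset_right

/-! Knaster–Tarski basics -/

lemma lfpSet_le {F : Set Q → Set Q} {P : Set Q} (h : F P ⊆ P) : lfpSet F ⊆ P :=
  Set.sInter_subset_of_mem h

lemma lfpSet_fixed {F : Set Q → Set Q} (hF : Monotone F) : F (lfpSet F) = lfpSet F := by
  have h1 : F (lfpSet F) ⊆ lfpSet F := by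
    intro x hx
    simp only [lfpSet, Set.mem_sInter, Set.mem_setOf_eq]
    intro S hS
    exact hS (hF (lfpSet_le hS) hx)
  exact h1.antisymm (lfpSet_le (hF h1))

lemma lfpSet_mono {F G : Set Q → Set Q} (h : ∀ S, F S ⊆ G S) : lfpSet F ⊆ lfpSet G := by
  apply Set.sInter_subset_sInter
  intro S hS
  exact (h S).trans hS

lemma le_gfpSet {F : Set Q → Set Q} {P : Set Q} (h : P ⊆ F P) : P ⊆ gfpSet F :=
  Set.subset_sUnion_of_mem h

lemma gfpSet_fixed {F : Set Q → Set Q} (hF : Monotone F) : gfpSet F = F (gfpSet F) := by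
  have h1 : gfpSet F ⊆ F (gfpSet F) := by
    intro x hx
    obtain ⟨S, hS, hxS⟩ := hx
    exact hF (le_gfpSet hS) (hS hxS)
  exact h1.antisymm (le_gfpSet (hF h1))

lemma gfpSet_mono {F G : Set Q → Set Q} (h : ∀ S, F S ⊆ G S) : gfpSet F ⊆ gfpSet G := by
  apply Set.sUnion_subset_sUnion
  intro S hS
  exact hS.trans (h S)

/-! Monotonicity of the fixed-point bodies -/

lemma body_mono (G : GameGraph Q) (FA FG : Set Q) {Z Z' Y Y' X X' W W' : Set Q}
    (hZ : Z ⊆ Z') (hY : Y ⊆ Y') (hX : X ⊆ X') (hW : W ⊆ W') :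
    body G FA FG Z Y X W ⊆ body G FA FG Z' Y' X' W' := by
  apply Set.union_subset_union
  apply Set.union_subset_union
  · exact Set.inter_subset_inter_right _ (Pre1_mono G hZ)
  · exact Pre1_mono G hY
  · exact Set.inter_subset_inter_right _
      (Precond_mono G hW (Set.diff_subset_diff_left hX))

lemma innerW_mono (G : GameGraph Q) (FA FG : Set Q) {Z Z' Y Y' X X' : Set Q}
    (hZ : Z ⊆ Z') (hY : Y ⊆ Y') (hX : X ⊆ X') :
    innerW G FA FG Z Y X ⊆ innerW G FA FG Z' Y' X' :=
  lfpSet_mono fun S => body_mono G FA FG hZ hY hX (subset_refl S)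

lemma innerW_fixed (G : GameGraph Q) (FA FG Z Y X : Set Q) :
    body G FA FG Z Y X (innerW G FA FG Z Y X) = innerW G FA FG Z Y X :=
  lfpSet_fixed fun _ _ hW =>
    body_mono G FA FG (subset_refl Z) (subset_refl Y) (subset_refl X) hW

lemma innerX_mono (G : GameGraph Q) (FA FG : Set Q) {Z Z' Y Y' : Set Q}
    (hZ : Z ⊆ Z') (hY : Y ⊆ Y') :
    innerX G FA FG Z Y ⊆ innerX G FA FG Z' Y' :=
  gfpSet_mono fun S => innerW_mono G FA FG hZ hY (subset_refl S)

lemma innerX_fixed (G : GameGraph Q) (FA FG Z Y : Set Q) :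
    innerX G FA FG Z Y = innerW G FA FG Z Y (innerX G FA FG Z Y) :=
  gfpSet_fixed fun _ _ hX =>
    innerW_mono G FA FG (subset_refl Z) (subset_refl Y) hX

lemma innerY_mono (G : GameGraph Q) (FA FG : Set Q) {Z Z' : Set Q} (hZ : Z ⊆ Z') :
    innerY G FA FG Z ⊆ innerY G FA FG Z' :=
  lfpSet_mono fun S => innerX_mono G FA FG hZ (subset_refl S)

lemma phi4_fixed (G : GameGraph Q) (FA FG : Set Q) :
    phi4 G FA FG = innerY G FA FG (phi4 G FA FG) :=
  gfpSet_fixed fun _ _ hZ => innerY_mono G FA FG hZ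

/-! Finite stabilization -/

lemma chain_stab [Fintype Q] (g : ℕ → Set Q) (hg : ∀ n, g n ⊆ g (n + 1)) :
    ∃ N, g (N + 1) = g N := by
  by_contra h
  push_neg at h
  have key : ∀ n, n ≤ (g n).ncard := by
    intro n
    induction n with
    | zero => omega
    | succ n ih =>
      have hss : g n ⊂ g (n + 1) := ssubset_of_subset_of_ne (hg n) fun e => h n e.symm
      have := Set.ncard_lt_ncard hss (Set.toFinite _)
      omega
  have h1 := key (Fintype.card Q + 1)
  have h2 : (g (Fintype.card Q + 1)).ncard ≤ (Set.univ : Set Q).ncard :=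
    Set.ncard_le_ncard (Set.subset_univ _) (Set.toFinite _)
  rw [Set.ncard_univ, Nat.card_eq_fintype_card] at h2
  omega

lemma iter_lfp [Fintype Q] {F : Set Q → Set Q} (hF : Monotone F)
    (g : ℕ → Set Q) (h0 : g 0 = ∅) (hs : ∀ n, g (n + 1) = F (g n)) :
    (∀ n, g n ⊆ g (n + 1)) ∧ (∀ n, g n ⊆ lfpSet F) ∧ ∃ N, lfpSet F ⊆ g N := by
  have mono : ∀ n, g n ⊆ g (n + 1) := by
    intro n
    induction n with
    | zero => rw [h0]; exact Set.empty_subset _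
    | succ n ih => rw [hs, hs]; exact hF ih
  refine ⟨mono, ?_, ?_⟩
  · intro n
    induction n with
    | zero => rw [h0]; exact Set.empty_subset _
    | succ n ih =>
      rw [hs]
      exact (hF ih).trans (lfpSet_fixed hF).subset
  · obtain ⟨N, hN⟩ := chain_stab g mono
    refine ⟨N, lfpSet_le ?_⟩
    rw [← hs]
    exact hN.subset

lemma chain_mono {g : ℕ → Set Q} (hg : ∀ n, g n ⊆ g (n + 1)) : Monotone g :=
  monotone_nat_of_le_succ hg

lemma exists_min_mem {g : ℕ → Set Q} {q : Q} (h : ∃ n, q ∈ g n) (h0 : q ∉ g 0) :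
    ∃ k, q ∈ g (k + 1) ∧ ∀ m ≤ k, q ∉ g m := by
  classical
  set n := Nat.find h with hn
  have hmem : q ∈ g n := Nat.find_spec h
  have hpos : 0 < n := by
    rcases Nat.eq_zero_or_pos n with h' | h'
    · rw [h'] at hmem; exact absurd hmem h0
    · exact h'
  refine ⟨n - 1, ?_, ?_⟩
  · have he : n - 1 + 1 = n := by omega
    rwa [he]
  · intro m hm
    exact Nat.find_min h (by omega)

/-! Properties of the approximants -/

variable [Fintype Q] (G : GameGraph Q) (FA FG : Set Q)

lemma innerX_monoY : Monotone fun Y => innerX G FA FG (phi4 G FA FG) Y :=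
  fun _ _ h => innerX_mono G FA FG (subset_refl _) h

lemma Yprops :
    (∀ n, Yapprox G FA FG n ⊆ Yapprox G FA FG (n + 1)) ∧
      (∀ n, Yapprox G FA FG n ⊆ phi4 G FA FG) ∧
        ∃ N, phi4 G FA FG ⊆ Yapprox G FA FG N := by
  have h := iter_lfp (innerX_monoY G FA FG) (Yapprox G FA FG) rfl fun n => rfl
  have heq : lfpSet (fun Y => innerX G FA FG (phi4 G FA FG) Y) = phi4 G FA FG :=
    (phi4_fixed G FA FG).symm
  rwa [heq] at h

lemma Ychain : Monotone (Yapprox G FA FG) := chain_mono (Yprops G FA FG).1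

lemma Ysub : ∀ n, Yapprox G FA FG n ⊆ phi4 G FA FG := (Yprops G FA FG).2.1

/-- `Yⁱ⁺¹` is a fixed point of the `W`-iteration. -/
lemma Yfix (k : ℕ) :
    innerW G FA FG (phi4 G FA FG) (Yapprox G FA FG k) (Yapprox G FA FG (k + 1)) =
      Yapprox G FA FG (k + 1) := by
  have h : Yapprox G FA FG (k + 1) =
      innerX G FA FG (phi4 G FA FG) (Yapprox G FA FG k) := rfl
  rw [h, ← innerX_fixed]

lemma Wprops (k : ℕ) :
    (∀ j, Wapprox G FA FG (k + 1) j ⊆ Wapprox G FA FG (k + 1) (j + 1)) ∧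
      (∀ j, Wapprox G FA FG (k + 1) j ⊆ Yapprox G FA FG (k + 1)) ∧
        ∃ M, Yapprox G FA FG (k + 1) ⊆ Wapprox G FA FG (k + 1) M := by
  have hm : Monotone fun W => body G FA FG (phi4 G FA FG) (Yapprox G FA FG k)
      (Yapprox G FA FG (k + 1)) W :=
    fun _ _ h => body_mono G FA FG (subset_refl _) (subset_refl _) (subset_refl _) h
  have h := iter_lfp hm (Wapprox G FA FG (k + 1)) rfl fun n => rfl
  have heq : lfpSet (fun W => body G FA FG (phi4 G FA FG) (Yapprox G FA FG k)
      (Yapprox G FA FG (k + 1)) W) = Yapprox G FA FG (k + 1) := Yfix G FA FG k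
  rwa [heq] at h

lemma Wchain (k : ℕ) : Monotone (Wapprox G FA FG (k + 1)) := chain_mono (Wprops G FA FG k).1

lemma Wsub (k : ℕ) : ∀ j, Wapprox G FA FG (k + 1) j ⊆ Yapprox G FA FG (k + 1) :=
  (Wprops G FA FG k).2.1

/-- The body equation for `Yⁱ⁺¹`. -/
lemma Ybody (k : ℕ) :
    body G FA FG (phi4 G FA FG) (Yapprox G FA FG k) (Yapprox G FA FG (k + 1))
      (Yapprox G FA FG (k + 1)) = Yapprox G FA FG (k + 1) := by
  have h := innerW_fixed G FA FG (phi4 G FA FG) (Yapprox G FA FG k)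
    (Yapprox G FA FG (k + 1))
  rwa [Yfix] at h

/-- Computation of `Wⁱ⁺¹₁`. -/
lemma W1 (k : ℕ) :
    Wapprox G FA FG (k + 1) 1 =
      FG ∩ G.Pre1 (phi4 G FA FG) ∪ G.Pre1 (Yapprox G FA FG k) := by
  show body G FA FG (phi4 G FA FG) (Yapprox G FA FG k) (Yapprox G FA FG (k + 1)) ∅ = _
  rw [body, Precond_empty, Set.inter_empty, Set.union_empty]

/-- `F_G ∩ Z^∞ ⊆ Pre¹(Z^∞)`. -/
lemma K1 : FG ∩ phi4 G FA FG ⊆ G.Pre1 (phi4 G FA FG) := by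
  rintro q ⟨-, hq⟩
  obtain ⟨N, hN⟩ := (Yprops G FA FG).2.2
  have hqN : q ∈ Yapprox G FA FG N := hN hq
  obtain ⟨k, hk⟩ : ∃ k, N = k + 1 := by
    cases N with
    | zero => exact absurd hqN (by simp [Yapprox])
    | succ k => exact ⟨k, rfl⟩
  subst hk
  rw [← Ybody G FA FG k] at hqN
  rcases hqN with (⟨-, h⟩ | h) | ⟨-, h⟩
  · exact h
  · exact Pre1_mono G (Ysub G FA FG k) h
  · refine Pre1_mono G ?_ (Precond_subset_Pre1 G h)
    exact Set.union_subset (Ysub G FA FG (k + 1))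
      (Set.diff_subset.trans (Ysub G FA FG (k + 1)))

/-- `(Q∖F_A) ∩ Pre¹(Yᵏ) ⊆ Yᵏ`. -/
lemma K2 : ∀ k, FAᶜ ∩ G.Pre1 (Yapprox G FA FG k) ⊆ Yapprox G FA FG k := by
  intro k
  cases k with
  | zero =>
    rintro q ⟨-, hq⟩
    rw [show Yapprox G FA FG 0 = ∅ from rfl, Pre1_empty] at hq
    exact absurd hq (Set.notMem_empty q)
  | succ k =>
    rintro q ⟨hqA, hq⟩
    rw [← Ybody G FA FG k]
    refine Or.inr ⟨hqA, Pre1_subset_PreE G hq, ?_⟩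
    exact Pre1_mono G Set.subset_union_left hq

end Aux


/-- Lemma 1 of the paper: characterization of the ranking.
(i) `q ∈ F_G ∩ Pre¹(Z^∞)` iff `rank(q) = (1,1)` iff `q ∈ F_G ∩ Z^∞`;
(ii) `q ∈ Pre¹(Yⁱ⁻¹)∖Yⁱ⁻¹` iff `rank(q) = (i,1)` (for `i > 1`), and such an `i > 1`
exists iff `q ∈ (F_A∖F_G) ∩ Z^∞`;
(iii) `rank(q) = (i,j)` with `j > 1` for some `i,j` iff `q ∈ Z^∞∖(F_A ∪ F_G)`. -/
theorem rank_characterization {Q : Type*} [Fintype Q] (G : GameGraph Q)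
    (FA FG : Set Q) (q : Q) :
    ((q ∈ FG ∩ G.Pre1 (phi4 G FA FG) ↔ hasRank G FA FG q 1 1) ∧
        (hasRank G FA FG q 1 1 ↔ q ∈ FG ∩ phi4 G FA FG)) ∧
      ((∀ i, 1 < i →
          (q ∈ G.Pre1 (Yapprox G FA FG (i - 1)) \ Yapprox G FA FG (i - 1) ↔
            hasRank G FA FG q i 1)) ∧
        ((∃ i, 1 < i ∧ hasRank G FA FG q i 1) ↔ q ∈ (FA \ FG) ∩ phi4 G FA FG)) ∧
      ((∃ i j, 1 < j ∧ hasRank G FA FG q i j) ↔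
        q ∈ phi4 G FA FG \ (FA ∪ FG)) := by
  classical
  have hY0 : Yapprox G FA FG 0 = (∅ : Set Q) := rfl
  have hW11 : Wapprox G FA FG 1 1 = FG ∩ G.Pre1 (phi4 G FA FG) := by
    rw [W1 G FA FG 0, hY0, Pre1_empty, Set.union_empty]
  -- characterization of rank (1,1)
  have h11 : hasRank G FA FG q 1 1 ↔ q ∈ FG ∩ G.Pre1 (phi4 G FA FG) := by
    constructor
    · rintro ⟨-, -, -, hw, -⟩
      exact hW11 ▸ hw
    · intro hq
      refine ⟨one_pos, one_pos, ⟨?_, ?_⟩, ?_, ?_⟩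
      · exact Wsub G FA FG 0 1 (hW11.symm ▸ hq)
      · simp [hY0]
      · exact hW11.symm ▸ hq
      · simp [show Wapprox G FA FG 1 0 = (∅ : Set Q) from rfl]
  -- part (ii)(a)
  have hiia : ∀ i, 1 < i →
      (q ∈ G.Pre1 (Yapprox G FA FG (i - 1)) \ Yapprox G FA FG (i - 1) ↔
        hasRank G FA FG q i 1) := by
    intro i hi
    obtain ⟨k, rfl⟩ : ∃ k, i = k + 2 := ⟨i - 2, by omega⟩
    have hW1 : Wapprox G FA FG (k + 2) 1 =
        FG ∩ G.Pre1 (phi4 G FA FG) ∪ G.Pre1 (Yapprox G FA FG (k + 1)) :=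
      W1 G FA FG (k + 1)
    constructor
    · rintro ⟨hpre, hnot⟩
      have hw : q ∈ Wapprox G FA FG (k + 2) 1 := hW1.symm ▸ Or.inr hpre
      refine ⟨by omega, one_pos, ⟨?_, hnot⟩, hw, ?_⟩
      · exact Wsub G FA FG (k + 1) 1 hw
      · simp [show Wapprox G FA FG (k + 2) 0 = (∅ : Set Q) from rfl]
    · rintro ⟨-, -, ⟨hy, hny⟩, hw, -⟩
      rw [hW1] at hw
      rcases hw with h | h
      · exact absurd (Ychain G FA FG (by omega : 1 ≤ k + 1)
          (Wsub G FA FG 0 1 (hW11.symm ▸ h))) hny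
      · exact ⟨h, hny⟩
  refine ⟨⟨h11.symm, ?_⟩, ⟨hiia, ?_⟩, ?_⟩
  · -- (i)(b)
    constructor
    · intro hr
      have h1 := (h11.mp hr).1
      obtain ⟨-, -, ⟨hy, -⟩, -, -⟩ := hr
      exact ⟨h1, Ysub G FA FG 1 hy⟩
    · rintro ⟨h1, h2⟩
      exact h11.mpr ⟨h1, K1 G FA FG ⟨h1, h2⟩⟩
  · -- (ii)(b)
    constructor
    · rintro ⟨i, hi, hr⟩
      obtain ⟨k, rfl⟩ : ∃ k, i = k + 2 := ⟨i - 2, by omega⟩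
      obtain ⟨hpre, hny⟩ := (hiia (k + 2) (by omega)).mpr hr
      obtain ⟨-, -, ⟨hy, -⟩, -, -⟩ := hr
      refine ⟨⟨?_, ?_⟩, Ysub G FA FG (k + 2) hy⟩
      · -- q ∈ FA
        by_contra hFA
        exact hny (K2 G FA FG (k + 1) ⟨hFA, hpre⟩)
      · -- q ∉ FG
        intro hFG
        have hq1 : q ∈ FG ∩ G.Pre1 (phi4 G FA FG) :=
          ⟨hFG, Pre1_mono G (Ysub G FA FG (k + 1)) hpre⟩
        exact hny (Ychain G FA FG (by omega : 1 ≤ k + 1)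
          (Wsub G FA FG 0 1 (hW11.symm ▸ hq1)))
    · rintro ⟨⟨hFA, hFG⟩, hZ⟩
      obtain ⟨N, hN⟩ := (Yprops G FA FG).2.2
      obtain ⟨k, hk1, hk2⟩ := exists_min_mem (g := Yapprox G FA FG) ⟨N, hN hZ⟩
        (by simp [hY0])
      have hbody := (Ybody G FA FG k).symm ▸ hk1
      rcases hbody with (⟨hg, -⟩ | h) | ⟨hA, -⟩
      · exact absurd hg hFG
      · -- q ∈ Pre1 (Y k)
        obtain ⟨k', rfl⟩ : ∃ k', k = k' + 1 := by
          cases k with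
          | zero =>
            rw [hY0, Pre1_empty] at h
            exact absurd h (Set.notMem_empty q)
          | succ k' => exact ⟨k', rfl⟩
        have hw : q ∈ Wapprox G FA FG (k' + 2) 1 :=
          (W1 G FA FG (k' + 1)).symm ▸ Or.inr h
        refine ⟨k' + 2, by omega, by omega, one_pos, ⟨hk1, hk2 (k' + 1) le_rfl⟩, hw, ?_⟩
        simp [show Wapprox G FA FG (k' + 2) 0 = (∅ : Set Q) from rfl]
      · exact absurd hFA hA
  · -- part (iii)
    constructor
    · rintro ⟨i, j, hj, hi0, -, ⟨hy, hny⟩, hw, hnw⟩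
      obtain ⟨k, rfl⟩ : ∃ k, i = k + 1 := ⟨i - 1, by omega⟩
      obtain ⟨l, rfl⟩ : ∃ l, j = l + 2 := ⟨j - 2, by omega⟩
      have hnw1 : q ∉ Wapprox G FA FG (k + 1) 1 := fun h =>
        hnw (Wchain G FA FG k (by omega : 1 ≤ l + 1) h)
      refine ⟨Ysub G FA FG (k + 1) hy, ?_⟩
      rintro (hA | hGmem)
      · -- q ∉ FA
        have hw' : q ∈ body G FA FG (phi4 G FA FG) (Yapprox G FA FG k)
            (Yapprox G FA FG (k + 1)) (Wapprox G FA FG (k + 1) (l + 1)) := hw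
        rcases hw' with (h | h) | ⟨hA', -⟩
        · exact hnw1 ((W1 G FA FG k).symm ▸ Or.inl h)
        · exact hnw1 ((W1 G FA FG k).symm ▸ Or.inr h)
        · exact hA' hA
      · -- q ∉ FG
        have hq1 : q ∈ FG ∩ G.Pre1 (phi4 G FA FG) :=
          ⟨hGmem, K1 G FA FG ⟨hGmem, Ysub G FA FG (k + 1) hy⟩⟩
        exact hnw1 ((W1 G FA FG k).symm ▸ Or.inl hq1)
    · rintro ⟨hZ, hnAG⟩
      have hFA : q ∉ FA := fun h => hnAG (Or.inl h)
      have hFG : q ∉ FG := fun h => hnAG (Or.inr h)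
      obtain ⟨N, hN⟩ := (Yprops G FA FG).2.2
      obtain ⟨k, hk1, hk2⟩ := exists_min_mem (g := Yapprox G FA FG) ⟨N, hN hZ⟩
        (by simp [hY0])
      obtain ⟨M, hM⟩ := (Wprops G FA FG k).2.2
      obtain ⟨l, hl1, hl2⟩ := exists_min_mem (g := Wapprox G FA FG (k + 1))
        ⟨M, hM hk1⟩ (by simp [show Wapprox G FA FG (k + 1) 0 = (∅ : Set Q) from rfl])
      have hlpos : 1 ≤ l := by
        by_contra hl0
        have hl0' : l = 0 := by omega
        subst hl0'
        have hw1 : q ∈ Wapprox G FA FG (k + 1) 1 := hl1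
        rw [W1 G FA FG k] at hw1
        rcases hw1 with h | h
        · exact hFG h.1
        · exact hk2 k le_rfl (K2 G FA FG k ⟨hFA, h⟩)
      exact ⟨k + 1, l + 1, by omega, by omega, by omega,
        ⟨hk1, hk2 k le_rfl⟩, hl1, hl2 l le_rfl⟩

end GR1
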